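/- Subject reduction for the by-need standard reduction: if M is closed and M standard-reduces to N (via deref, assoc-L, or assoc-R in an evaluation context), then N is closed. -/
import Mathlib


inductive Tm : Type
  | var : Nat → Tm
  | lam : Tm → Tm
  | app : Tm → Tm → Tm
deriving DecidableEq

/-- shift ↑(M, x, m): increment all indices ≥ m by x -/
def shift : Tm → Nat → Nat → Tm
  | .var n, x, m => if n ≥ m then .var (n + x) else .var n
  | .lam M, x, m => .lam (shift M x (m+1))
  | .app M N, x, m => .app (shift M x m) (shift N x m)

/-- apply a renaming environment R to a term: (R)n = n + R(n) -/
def ren : List Nat → Tm → Tm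
  | R, .var n => .var (n + R.getD n 0)
  | R, .lam M => .lam (ren (0 :: R) M)
  | R, .app M N => .app (ren R M) (ren R N)

/-- values are lambda abstractions -/
def IsVal (M : Tm) : Prop := ∃ M', M = Tm.lam M'

/-- Evaluation contexts E ::= [] | E M | (λ.E) M | (λ.E'[n]) E with n = Δ(E') -/
inductive ECtx : Type
  | hole : ECtx
  | appL : ECtx → Tm → ECtx
  | bind : ECtx → Tm → ECtx
  | opC  : ECtx → ECtx → ECtx

/-- Δ : E → ℕ -/
def delta : ECtx → Nat
  | .hole => 0
  | .appL E _ => delta E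
  | .bind E _ => delta E + 1
  | .opC _ E => delta E

/-- plugging E[M]; in the opC case the bound variable is Δ(E') -/
def plugE : ECtx → Tm → Tm
  | .hole, M => M
  | .appL E N, M => .app (plugE E M) N
  | .bind E N, M => .app (.lam (plugE E M)) N
  | .opC E' E, M => .app (.lam (plugE E' (.var (delta E')))) (plugE E M)

/-- Answer contexts A ::= [] | (λ.A) M -/
inductive ACtx : Type
  | hole : ACtx
  | bind : ACtx → Tm → ACtx
deriving DecidableEq

def plugA : ACtx → Tm → Tm
  | .hole, M => M
  | .bind A N, M => .app (.lam (plugA A M)) N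

def deltaA : ACtx → Nat
  | .hole => 0
  | .bind A _ => deltaA A + 1

/-- closed at depth d -/
def ClosedAt : Tm → Nat → Prop
  | .var n, d => n < d
  | .lam M, d => ClosedAt M (d+1)
  | .app M N, d => ClosedAt M d ∧ ClosedAt N d

/-- the by-need notions of reduction: deref, assoc-L, assoc-R -/
inductive Red : Tm → Tm → Prop
  | deref : ∀ (E : ECtx) (n : Nat) (V : Tm), IsVal V → delta E = n →
      Red (.app (.lam (plugE E (.var n))) V)
          (.app (.lam (plugE E (shift V (n+1) 0))) V)
  | assocL : ∀ (A : ACtx) (V M N : Tm), IsVal V →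
      Red (.app (.app (.lam (plugA A V)) M) N)
          (.app (.lam (plugA A (.app V (shift N (deltaA A + 1) 0)))) M)
  | assocR : ∀ (E : ECtx) (n : Nat) (A : ACtx) (V M : Tm), IsVal V → delta E = n →
      Red (.app (.lam (plugE E (.var n))) (.app (.lam (plugA A V)) M))
          (.app (.lam (plugA A (.app (shift (.lam (plugE E (.var n))) (deltaA A + 1) 0) V))) M)

/-- standard reduction: E[M] ↦ E[M'] when M → M' -/
inductive StdRed : Tm → Tm → Prop
  | mk : ∀ (E : ECtx) (M N : Tm), Red M N → StdRed (plugE E M) (plugE E N)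

lemma shift_closed : ∀ (M : Tm) (d x m : Nat), ClosedAt M d → ClosedAt (shift M x m) (d + x)
  | .var n, d, x, m, h => by
      simp only [shift]; split <;> simp only [ClosedAt] at * <;> omega
  | .lam M, d, x, m, h => by
      simp only [shift, ClosedAt] at *
      have := shift_closed M (d+1) x (m+1) h
      have e : d + 1 + x = d + x + 1 := by omega
      rwa [e] at this
  | .app M N, d, x, m, h => by
      simp only [shift, ClosedAt] at *
      exact ⟨shift_closed M d x m h.1, shift_closed N d x m h.2⟩

lemma plugE_extract : ∀ (E : ECtx) (M : Tm) (d : Nat),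
    ClosedAt (plugE E M) d → ClosedAt M (d + delta E)
  | .hole, M, d, h => h
  | .appL E N, M, d, h => plugE_extract E M d h.1
  | .bind E N, M, d, h => by
      have := plugE_extract E M (d+1) h.1
      simpa [delta, Nat.add_assoc, Nat.add_comm, Nat.add_left_comm] using this
  | .opC E' E, M, d, h => plugE_extract E M d h.2

lemma plugE_replace : ∀ (E : ECtx) (M M' : Tm) (d : Nat),
    ClosedAt (plugE E M) d → ClosedAt M' (d + delta E) → ClosedAt (plugE E M') d
  | .hole, M, M', d, h, h' => h'
  | .appL E N, M, M', d, h, h' => ⟨plugE_replace E M M' d h.1 h', h.2⟩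
  | .bind E N, M, M', d, h, h' => by
      refine ⟨plugE_replace E M M' (d+1) h.1 ?_, h.2⟩
      simp only [delta] at h'
      have e : d + 1 + delta E = d + (delta E + 1) := by omega
      rwa [e]
  | .opC E' E, M, M', d, h, h' => ⟨h.1, plugE_replace E M M' d h.2 h'⟩

lemma plugA_extract : ∀ (A : ACtx) (M : Tm) (d : Nat),
    ClosedAt (plugA A M) d → ClosedAt M (d + deltaA A)
  | .hole, M, d, h => h
  | .bind A N, M, d, h => by
      have := plugA_extract A M (d+1) h.1
      simpa [deltaA, Nat.add_assoc, Nat.add_comm, Nat.add_left_comm] using this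

lemma plugA_replace : ∀ (A : ACtx) (M M' : Tm) (d : Nat),
    ClosedAt (plugA A M) d → ClosedAt M' (d + deltaA A) → ClosedAt (plugA A M') d
  | .hole, M, M', d, h, h' => h'
  | .bind A N, M, M', d, h, h' => by
      refine ⟨plugA_replace A M M' (d+1) h.1 ?_, h.2⟩
      simp only [deltaA] at h'
      have e : d + 1 + deltaA A = d + (deltaA A + 1) := by omega
      rwa [e]

lemma red_closed : ∀ (M N : Tm) (d : Nat), Red M N → ClosedAt M d → ClosedAt N d := by
  intro M N d hr hc
  cases hr with
  | deref E n V hv hδ =>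
      obtain ⟨h1, h2⟩ := hc
      refine ⟨plugE_replace E _ _ (d+1) h1 ?_, h2⟩
      have := shift_closed V d (n+1) 0 h2
      have e : d + (n+1) = d + 1 + delta E := by omega
      rwa [e] at this
  | assocL A V M' N' hv =>
      obtain ⟨⟨h1, h2⟩, h3⟩ := hc
      refine ⟨plugA_replace A _ _ (d+1) h1 ?_, h2⟩
      have hV := plugA_extract A V (d+1) h1
      have hN := shift_closed N' d (deltaA A + 1) 0 h3
      have e : d + (deltaA A + 1) = d + 1 + deltaA A := by omega
      rw [e] at hN
      exact ⟨hV, hN⟩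
  | assocR E n A V M' hv hδ =>
      obtain ⟨h1, ⟨h2, h3⟩⟩ := hc
      refine ⟨plugA_replace A _ _ (d+1) h2 ?_, h3⟩
      have hV := plugA_extract A V (d+1) h2
      have hE : ClosedAt (Tm.lam (plugE E (Tm.var n))) d := h1
      have hS := shift_closed (Tm.lam (plugE E (Tm.var n))) d (deltaA A + 1) 0 hE
      have e : d + (deltaA A + 1) = d + 1 + deltaA A := by omega
      rw [e] at hS
      exact ⟨hS, hV⟩

theorem subject_reduction :
    ∀ M N : Tm, ClosedAt M 0 → StdRed M N → ClosedAt N 0 := by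
  intro M N hc hs
  cases hs with
  | mk E M₀ N₀ hr =>
      exact plugE_replace E M₀ N₀ 0 hc (red_closed M₀ N₀ (0 + delta E) hr (plugE_extract E M₀ 0 hc))
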